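/- Let L be a valuation lattice, i.e., a linearly ordered principally generated C-lattice lattice domain, and let m be its (unique) maximal element. Then L is divisorial if and only if m is a principal element. -/

import Mathlib

/-- A multiplicative lattice: a complete lattice (bottom `⊥` playing the role of `0`)
which is a commutative monoid whose identity `1` is the top element, and in which
multiplication distributes over arbitrary joins. -/
class MulLattice (L : Type*) extends CompleteLattice L, CommMonoid L where
  one_eq_top : (1 : L) = ⊤
  mul_sSup : ∀ (a : L) (S : Set L), a * sSup S = ⨆ b ∈ S, a * b

namespace MulLattice

variable {L : Type*} [MulLattice L]

/-- The residual `(y : x) = ⋁ {a | a * x ≤ y}`. -/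
def res (y x : L) : L := sSup {a : L | a * x ≤ y}

/-- `x` is meet-principal: `y ⊓ z * x = ((y : x) ⊓ z) * x` for all `y, z`. -/
def IsMeetPrincipal (x : L) : Prop := ∀ y z : L, y ⊓ z * x = (res y x ⊓ z) * x

/-- `x` is join-principal: `y ⊔ (z : x) = ((y * x ⊔ z) : x)` for all `y, z`. -/
def IsJoinPrincipal (x : L) : Prop := ∀ y z : L, y ⊔ res z x = res (y * x ⊔ z) x

/-- `x` is principal if it is both meet-principal and join-principal. -/
def IsPrincipal (x : L) : Prop := IsMeetPrincipal x ∧ IsJoinPrincipal x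

/-- A prime element: a proper element `p` with `x * y ≤ p → x ≤ p ∨ y ≤ p`. -/
def IsPrime (p : L) : Prop := p ≠ 1 ∧ ∀ x y : L, x * y ≤ p → x ≤ p ∨ y ≤ p

/-- A maximal element: an element maximal in `L - {1}`. -/
def IsMaximal (m : L) : Prop := m ≠ 1 ∧ ∀ b : L, m < b → b = 1

end MulLattice

/-- A principally generated C-lattice: a multiplicative lattice in which `1` is compact,
compact elements are closed under multiplication, every element is a join of compact
elements and every element is a join of principal elements. -/
class PGCLattice (L : Type*) extends MulLattice L where
  top_isCompact : IsCompactElement (⊤ : L)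
  compact_mul : ∀ a b : L, IsCompactElement a →
    IsCompactElement b → IsCompactElement (a * b)
  compactly_generated : ∀ a : L,
    a = sSup {c : L | IsCompactElement c ∧ c ≤ a}
  principally_generated : ∀ a : L,
    a = sSup {x : L | MulLattice.IsPrincipal x ∧ x ≤ a}

namespace MulLattice

variable {L : Type*}

/-- A lattice domain: `0 = ⊥` is a prime element. -/
def IsLatticeDomain (L : Type*) [MulLattice L] : Prop := IsPrime (⊥ : L)

variable [PGCLattice L]

open Classical in
/-- The divisorial (`v`-)closure of `a`: equals `(x : (x : a))` for a nonzero principal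
`x ≤ a` when such an `x` exists (in a lattice domain this is independent of the choice
of `x`), and `⊥` otherwise (in particular `vclos ⊥ = ⊥`). -/
noncomputable def vclos (a : L) : L :=
  if h : ∃ x : L, IsPrincipal x ∧ x ≠ ⊥ ∧ x ≤ a then
    res h.choose (res h.choose a)
  else ⊥

/-- `a` is divisorial if `a = a_v`. -/
def IsDivisorial (a : L) : Prop := vclos a = a

/-- `L` is h-local: every nonzero prime is below a unique maximal element and
every nonzero element is below only finitely many maximal elements. -/
def IsHLocal (L : Type*) [PGCLattice L] : Prop :=
  (∀ r : L, r ≠ ⊥ → IsPrime r → ∃! m : L, IsMaximal m ∧ r ≤ m) ∧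
  (∀ b : L, b ≠ ⊥ → {m : L | IsMaximal m ∧ b ≤ m}.Finite)

end MulLattice

open MulLattice

/-!
In a linearly ordered lattice domain, if `a < y` with `y` principal then `a = (a : y) y` with
`(a : y) ≠ 1`, hence `(a : y) ≤ m` and `a ≤ m y`. Principal elements `p` are divisorial: for a
nonzero principal `x ≤ p` we have `x = t p` where `t = (x : p)` is principal (cancelling a
nonzero principal factor preserves principality), so `(x : t) = p`.

If `m` is principal and `y` is a principal element with `y ≤ a_v` but `y ≰ a`, then `a ≤ m y`,
and `m y` is principal, hence divisorial, so `y ≤ a_v ≤ m y`, forcing `m = 1`. Conversely, if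
`m = (x : (x : m))`, then some principal `p ≤ (x : m)` lies above `x`, so `x = m p`, and `m` is
principal because `x` and `p` are.
-/

namespace MulLattice

section MulLattice

variable {L : Type*} [MulLattice L]

instance : IsQuantale L where
  mul_sSup_distrib := mul_sSup
  sSup_mul_distrib s y := by simp_rw [mul_comm _ y]; exact mul_sSup y s

protected theorem le_one (a : L) : a ≤ 1 := one_eq_top (L := L) ▸ le_top

protected theorem one_le_iff {a : L} : 1 ≤ a ↔ a = 1 :=
  ⟨fun h => le_antisymm (MulLattice.le_one a) h, ge_of_eq⟩

theorem le_res_iff {a y x : L} : a ≤ res y x ↔ a * x ≤ y :=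
  Quantale.leftMulResiduation_le_iff_mul_le

theorem res_mul_le (y x : L) : res y x * x ≤ y := le_res_iff.1 le_rfl

theorem one_le_res_iff {y x : L} : 1 ≤ res y x ↔ x ≤ y := by rw [le_res_iff, one_mul]

theorem res_antitone {y x x' : L} (h : x ≤ x') : res y x' ≤ res y x :=
  le_res_iff.2 ((mul_le_mul_right h _).trans (res_mul_le y x'))

theorem le_res_res (x a : L) : a ≤ res x (res x a) :=
  le_res_iff.2 (mul_comm a _ ▸ res_mul_le x a)

theorem res_mul (z x y : L) : res z (x * y) = res (res z x) y :=
  eq_of_forall_le_iff fun a => by simp only [le_res_iff, mul_assoc, mul_comm x y]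

theorem isPrincipal_bot : IsPrincipal (⊥ : L) := by
  have res_bot : ∀ y : L, res y ⊥ = ⊤ := fun y => top_unique (le_res_iff.2 (by simp))
  exact ⟨fun y z => by simp, fun y z => by simp only [res_bot, sup_top_eq]⟩

theorem IsPrincipal.mul {x y : L} (hx : IsPrincipal x) (hy : IsPrincipal y) :
    IsPrincipal (x * y) := by
  refine ⟨fun u z => ?_, fun u z => ?_⟩
  · calc u ⊓ z * (x * y) = u ⊓ (z * y) * x := by rw [← mul_assoc, mul_right_comm]
      _ = ((res (res u x) y ⊓ z) * y) * x := by rw [hx.1, hy.1]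
      _ = (res u (x * y) ⊓ z) * (x * y) := by rw [res_mul, mul_assoc, mul_comm y x]
  · rw [res_mul, res_mul, hy.2, hx.2, mul_assoc, mul_comm y x]

theorem IsPrincipal.eq_res_mul {p q : L} (hp : IsPrincipal p) (h : q ≤ p) :
    q = res q p * p := by
  simpa [inf_eq_left.2 h, inf_eq_left.2 (MulLattice.le_one (res q p))] using hp.1 q 1

section Domain

variable (hL : IsLatticeDomain L) {p : L} (hp : IsPrincipal p) (hp0 : p ≠ ⊥)
include hL hp0

theorem res_bot_eq_bot : res (⊥ : L) p = ⊥ :=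
  le_bot_iff.1 ((hL.2 _ p (res_mul_le ⊥ p)).resolve_right (hp0 ∘ le_bot_iff.1))

include hp

theorem IsPrincipal.res_mul_cancel (z : L) : res (z * p) p = z := by
  simpa [res_bot_eq_bot hL hp0] using (hp.2 z ⊥).symm

theorem IsPrincipal.mul_le_mul_iff {u z : L} : u * p ≤ z * p ↔ u ≤ z := by
  rw [← le_res_iff, hp.res_mul_cancel hL hp0]

theorem IsPrincipal.inf_mul (u w : L) : (u ⊓ w) * p = u * p ⊓ w * p := by
  rw [hp.1, hp.res_mul_cancel hL hp0]

theorem IsPrincipal.res_mul_mul_cancel (y x : L) : res (y * p) (x * p) = res y x :=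
  eq_of_forall_le_iff fun a => by
    rw [le_res_iff, le_res_iff, ← mul_assoc, hp.mul_le_mul_iff hL hp0]

theorem IsPrincipal.of_mul {x : L} (hxp : IsPrincipal (x * p)) : IsPrincipal x := by
  refine ⟨fun y z => ?_, fun y z => ?_⟩
  · refine le_antisymm ((hp.mul_le_mul_iff hL hp0).1 ?_) ((hp.mul_le_mul_iff hL hp0).1 ?_) <;>
    · rw [hp.inf_mul hL hp0, mul_assoc, mul_assoc, hxp.1, hp.res_mul_mul_cancel hL hp0]
  · rw [← hp.res_mul_mul_cancel hL hp0 z x, ← hp.res_mul_mul_cancel hL hp0 _ x, hxp.2,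
      Quantale.sup_mul_distrib, mul_assoc]

theorem IsPrincipal.res_res_eq {x : L} (hx : IsPrincipal x) (hx0 : x ≠ ⊥) (hxp : x ≤ p) :
    res x (res x p) = p := by
  set t := res x p
  have hxt : x = t * p := hp.eq_res_mul hxp
  have ht : IsPrincipal t := hp.of_mul hL hp0 (hxt ▸ hx)
  have ht0 : t ≠ ⊥ := fun h => hx0 (by rw [hxt, h, Quantale.bot_mul])
  rw [hxt, mul_comm, ht.res_mul_cancel hL ht0]

end Domain

theorem IsMaximal.le_of_ne_one (hlin : ∀ a b : L, a ≤ b ∨ b ≤ a) {m : L} (hm : IsMaximal m)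
    {s : L} (hs : s ≠ 1) : s ≤ m :=
  (hlin s m).elim id fun h => h.eq_or_lt.elim (fun he => he.ge) fun hlt => absurd (hm.2 s hlt) hs

theorem le_maximal_mul_of_not_le (hlin : ∀ a b : L, a ≤ b ∨ b ≤ a) {m : L} (hm : IsMaximal m)
    {a y : L} (hy : IsPrincipal y) (hya : ¬ y ≤ a) : a ≤ m * y := by
  have hay : a ≤ y := (hlin a y).resolve_right hya
  have hs : res a y ≠ 1 := fun h => hya (by rw [hy.eq_res_mul hay, h, one_mul])
  calc a = res a y * y := hy.eq_res_mul hay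
    _ ≤ m * y := mul_le_mul_left (hm.le_of_ne_one hlin hs) y

end MulLattice

section PGCLattice

variable {L : Type*} [PGCLattice L]

theorem exists_isPrincipal_le_not_le {b c : L} (h : ¬ b ≤ c) :
    ∃ q : L, IsPrincipal q ∧ q ≤ b ∧ ¬ q ≤ c := by
  by_contra! hall
  exact h ((PGCLattice.principally_generated b).trans_le
    (sSup_le fun q hq => hall q hq.1 hq.2))

theorem vclos_bot : vclos (⊥ : L) = ⊥ :=
  dif_neg fun ⟨_, _, hx0, hx⟩ => hx0 (le_bot_iff.1 hx)

theorem exists_vclos_eq_res_res {a : L} (ha : a ≠ ⊥) :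
    ∃ x : L, IsPrincipal x ∧ x ≠ ⊥ ∧ x ≤ a ∧ vclos a = res x (res x a) := by
  obtain ⟨x, hx, hxa, hx0⟩ := exists_isPrincipal_le_not_le (mt le_bot_iff.1 ha)
  have h : ∃ x : L, IsPrincipal x ∧ x ≠ ⊥ ∧ x ≤ a := ⟨x, hx, fun h => hx0 h.le, hxa⟩
  exact ⟨h.choose, h.choose_spec.1, h.choose_spec.2.1, h.choose_spec.2.2, by rw [vclos, dif_pos h]⟩

section Valuation

variable (hL : IsLatticeDomain L) (hlin : ∀ a b : L, a ≤ b ∨ b ≤ a) {m : L} (hm : IsMaximal m)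
include hL hlin hm

theorem isPrincipal_of_isDivisorial (hmd : IsDivisorial m) : IsPrincipal m := by
  rcases eq_or_ne m ⊥ with rfl | hm0
  · exact isPrincipal_bot
  obtain ⟨x, hx, hx0, -, hv⟩ := exists_vclos_eq_res_res hm0
  have hmx : res x (res x m) = m := hv ▸ hmd
  -- otherwise `m = (x : (x : m)) ≥ (x : x) = 1`
  have hres : ¬ res x m ≤ x := fun h => hm.1 <| MulLattice.one_le_iff.1 <|
    hmx ▸ (one_le_res_iff.2 le_rfl).trans (res_antitone h)
  obtain ⟨p, hp, hpr, hpx⟩ := exists_isPrincipal_le_not_le hres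
  have hp0 : p ≠ ⊥ := fun h => hpx (h ▸ bot_le)
  have hxmp : x = m * p :=
    le_antisymm (le_maximal_mul_of_not_le hlin hm hp hpx) (mul_comm m p ▸ le_res_iff.1 hpr)
  exact hp.of_mul hL hp0 (hxmp ▸ hx)

theorem isDivisorial_of_isPrincipal (hmp : IsPrincipal m) (a : L) : IsDivisorial a := by
  rcases eq_or_ne a ⊥ with rfl | ha0
  · exact vclos_bot
  obtain ⟨x, hx, hx0, hxa, hv⟩ := exists_vclos_eq_res_res ha0
  rw [IsDivisorial, hv]
  refine le_antisymm ?_ (le_res_res x a)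
  by_contra hva
  obtain ⟨y, hy, hyv, hya⟩ := exists_isPrincipal_le_not_le hva
  have hy0 : y ≠ ⊥ := fun h => hya (h ▸ bot_le)
  have hamy : a ≤ m * y := le_maximal_mul_of_not_le hlin hm hy hya
  have hmy0 : m * y ≠ ⊥ := fun h => hx0 (le_bot_iff.1 (h ▸ hxa.trans hamy))
  have hymy : 1 * y ≤ m * y := calc
    1 * y ≤ res x (res x a) := (one_mul y).symm ▸ hyv
    _ ≤ res x (res x (m * y)) := res_antitone (res_antitone hamy)
    _ = m * y := (hmp.mul hy).res_res_eq hL hmy0 hx hx0 (hxa.trans hamy)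
  exact hm.1 (MulLattice.one_le_iff.1 ((hy.mul_le_mul_iff hL hy0).1 hymy))

end Valuation

end PGCLattice

end MulLattice

theorem stmt18 {L : Type*} [PGCLattice L] (hL : IsLatticeDomain L)
    (hlin : ∀ a b : L, a ≤ b ∨ b ≤ a)
    (m : L) (hm : IsMaximal m) :
    (∀ a : L, IsDivisorial a) ↔ IsPrincipal m :=
  ⟨fun h => isPrincipal_of_isDivisorial hL hlin hm (h m), isDivisorial_of_isPrincipal hL hlin hm⟩
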